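/- Let δ > 0 and β > 1/2 and let M ≥ 0. Suppose a process G on [0,∞) satisfies |G(t) − G(s)| ≤ M·√(h·(1 + log(t/h) + δ·log t)) for all 1 ≤ s < t with h = t − s ≥ 1 (pathwise). Then for every ε > 0 there exists T₀ such that for all t ≥ T₀ and all s with 0 ≤ s ≤ t/2, t − s ≥ 1: |G(t) − G(t−s)| / (√s · (log(C₀ + 1/s))^β · (log(C₀ + t))^β) ≤ ε·M·c_β, where c_β is a constant depending only on β, C₀, δ. In other words, sup over {t ≥ T, 0 ≤ s ≤ t/2, t−s ≥ 1} of the weighted increment tends to 0 as T → ∞ (for fixed M). -/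
import Mathlib

open Real Filter

set_option maxHeartbeats 800000

private lemma sqrt_add_le' (a b : ℝ) (ha : 0 ≤ a) (hb : 0 ≤ b) :
    Real.sqrt (a + b) ≤ Real.sqrt a + Real.sqrt b := by
  nlinarith [Real.sq_sqrt ha, Real.sq_sqrt hb, Real.sqrt_nonneg a, Real.sqrt_nonneg b,
    Real.sq_sqrt (by linarith : (0:ℝ) ≤ a + b), Real.sqrt_nonneg (a+b),
    mul_nonneg (Real.sqrt_nonneg a) (Real.sqrt_nonneg b)]

/-- If `|G(t) − G(s)| ≤ M·√(h·(1 + log(t/h) + δ·log t))` for all `1 ≤ s < t` (with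
`h = t − s`), then the weighted increments
`|G(t) − G(t−s)| / (√s·log^β(C₀+1/s)·log^β(C₀+t))` over `{0 ≤ s ≤ t/2, t−s ≥ 1}`
tend to `0` as `t → ∞`: for every `ε > 0` there is `T₀` beyond which they are
at most `ε·M·c_β` for a constant `c_β` depending only on `β, C₀, δ`. -/
theorem stmt_18 (δ β C₀ M : ℝ) (hδ : 0 < δ) (hβ : 1 / 2 < β) (hC : 1 < C₀) (hM : 0 ≤ M)
    (G : ℝ → ℝ)
    (hG : ∀ s t : ℝ, 1 ≤ s → s < t →
      |G t - G s| ≤ M * Real.sqrt ((t - s) * (1 + Real.log (t / (t - s)) + δ * Real.log t))) :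
    ∃ c : ℝ, 0 < c ∧
      ∀ ε : ℝ, 0 < ε → ∃ T₀ : ℝ, ∀ t : ℝ, T₀ ≤ t →
        ∀ s : ℝ, 0 ≤ s → s ≤ t / 2 → 1 ≤ t - s →
          |G t - G (t - s)| /
              (Real.sqrt s * (Real.log (C₀ + 1 / s)) ^ β * (Real.log (C₀ + t)) ^ β)
            ≤ ε * M * c := by
  have ha : 0 < Real.log C₀ := Real.log_pos hC
  set a := Real.log C₀ with ha_def
  set K : ℝ := (Real.sqrt (2 + δ) + 1) / a ^ β + a ^ ((1:ℝ)/2 - β) with hK_def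
  have haβ : 0 < a ^ β := Real.rpow_pos_of_pos ha β
  have hKpos : 0 < K := by positivity
  refine ⟨1, one_pos, ?_⟩
  intro ε hε
  -- L(t) = log (C₀ + t) → ∞
  have hLtop : Tendsto (fun t : ℝ => Real.log (C₀ + t)) atTop atTop :=
    Real.tendsto_log_atTop.comp (tendsto_atTop_add_const_left _ C₀ tendsto_id)
  have hpow : Tendsto (fun t : ℝ => K * Real.log (C₀ + t) ^ ((1:ℝ)/2 - β)) atTop (nhds 0) := by
    have h1 : Tendsto (fun x : ℝ => x ^ ((1:ℝ)/2 - β)) atTop (nhds 0) := by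
      have h := tendsto_rpow_neg_atTop (y := β - 1/2) (by linarith)
      have : ((1:ℝ)/2 - β) = -(β - 1/2) := by ring
      rw [this]; exact h
    have h2 := (h1.comp hLtop).const_mul K
    simpa using h2
  have hev : ∀ᶠ t : ℝ in atTop,
      K * Real.log (C₀ + t) ^ ((1:ℝ)/2 - β) ≤ ε ∧ 1 ≤ Real.log (C₀ + t) := by
    filter_upwards [hpow.eventually_le_const hε, hLtop.eventually_ge_atTop 1] with t h1 h2
    exact ⟨h1, h2⟩
  obtain ⟨T₀, hT₀⟩ := eventually_atTop.1 hev
  refine ⟨max T₀ 1, ?_⟩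
  intro t ht s hs hs2 hst
  obtain ⟨hKε, hL1⟩ := hT₀ t (le_trans (le_max_left _ _) ht)
  have ht1 : 1 ≤ t := le_trans (le_max_right _ _) ht
  have ht0 : 0 < t := by linarith
  set L := Real.log (C₀ + t) with hL_def
  have hL0 : 0 < L := by linarith
  rcases hs.eq_or_lt with rfl | hs0
  · simp only [sub_zero, sub_self, abs_zero, zero_div]
    positivity
  -- main case s > 0
  set P := Real.log (C₀ + 1/s) with hP_def
  have haP : a ≤ P := Real.log_le_log (by linarith) (by linarith [one_div_pos.mpr hs0])
  have hP0 : 0 < P := lt_of_lt_of_le ha haP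
  have hPβ : 0 < P ^ β := Real.rpow_pos_of_pos hP0 β
  have hLβ : 0 < L ^ β := Real.rpow_pos_of_pos hL0 β
  have hsq : 0 < Real.sqrt s := Real.sqrt_pos.2 hs0
  -- numerator bound from hG
  have hGb := hG (t - s) t hst (by linarith)
  have hts : t - (t - s) = s := by ring
  rw [hts] at hGb
  -- bound the log expression
  have hlogtL : Real.log t ≤ L := Real.log_le_log ht0 (by linarith)
  have hlogdiv : Real.log (t / s) = Real.log t - Real.log s :=
    Real.log_div (ne_of_gt ht0) (ne_of_gt hs0)
  set A : ℝ := 1 + (1 + δ) * L with hA_def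
  have hA0 : 0 ≤ A := by
    have := mul_nonneg (by linarith : (0:ℝ) ≤ 1 + δ) hL0.le
    linarith
  have hE : 1 + Real.log (t / s) + δ * Real.log t ≤ A + |Real.log s| := by
    rw [hlogdiv, hA_def]
    have h1 : -Real.log s ≤ |Real.log s| := neg_le_abs _
    have h2 : δ * Real.log t ≤ δ * L := mul_le_mul_of_nonneg_left hlogtL hδ.le
    nlinarith
  -- √|log s| ≤ √P + √L
  have habs : Real.sqrt |Real.log s| ≤ Real.sqrt P + Real.sqrt L := by
    rcases le_or_gt s 1 with hs1 | hs1
    · have hls : Real.log s ≤ 0 := Real.log_nonpos hs0.le hs1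
      have : |Real.log s| = Real.log (1/s) := by
        rw [abs_of_nonpos hls, one_div, Real.log_inv]
      have hle : |Real.log s| ≤ P := by
        rw [this]; exact Real.log_le_log (by positivity) (by linarith)
      calc Real.sqrt |Real.log s| ≤ Real.sqrt P := Real.sqrt_le_sqrt hle
        _ ≤ Real.sqrt P + Real.sqrt L := by linarith [Real.sqrt_nonneg L]
    · have hls : 0 ≤ Real.log s := Real.log_nonneg hs1.le
      have hle : |Real.log s| ≤ L := by
        rw [abs_of_nonneg hls]
        calc Real.log s ≤ Real.log t := Real.log_le_log hs0 (by linarith)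
          _ ≤ L := hlogtL
      calc Real.sqrt |Real.log s| ≤ Real.sqrt L := Real.sqrt_le_sqrt hle
        _ ≤ Real.sqrt P + Real.sqrt L := by linarith [Real.sqrt_nonneg P]
  -- numerator ≤ M * √s * (√A + √P + √L)
  have hnum : |G t - G (t - s)| ≤
      M * (Real.sqrt s * (Real.sqrt A + Real.sqrt P + Real.sqrt L)) := by
    refine hGb.trans (mul_le_mul_of_nonneg_left ?_ hM)
    calc Real.sqrt (s * (1 + Real.log (t / s) + δ * Real.log t))
        ≤ Real.sqrt (s * (A + |Real.log s|)) := by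
          apply Real.sqrt_le_sqrt
          exact mul_le_mul_of_nonneg_left hE hs0.le
      _ = Real.sqrt s * Real.sqrt (A + |Real.log s|) := Real.sqrt_mul hs0.le _
      _ ≤ Real.sqrt s * (Real.sqrt A + Real.sqrt |Real.log s|) := by
          apply mul_le_mul_of_nonneg_left (sqrt_add_le' _ _ hA0 (abs_nonneg _)) hsq.le
      _ ≤ Real.sqrt s * (Real.sqrt A + Real.sqrt P + Real.sqrt L) := by
          apply mul_le_mul_of_nonneg_left _ hsq.le
          linarith
  -- bound the ratio
  have hrpowsum : (Real.sqrt A + Real.sqrt P + Real.sqrt L) / (P ^ β * L ^ β)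
      ≤ K * L ^ ((1:ℝ)/2 - β) := by
    have hAle : Real.sqrt A ≤ Real.sqrt (2 + δ) * Real.sqrt L := by
      rw [← Real.sqrt_mul (by linarith)]
      apply Real.sqrt_le_sqrt
      rw [hA_def]; ring_nf; linarith
    have hsqL : Real.sqrt L = L ^ ((1:ℝ)/2) := Real.sqrt_eq_rpow L
    have hsqP : Real.sqrt P = P ^ ((1:ℝ)/2) := Real.sqrt_eq_rpow P
    have hβ0 : (0:ℝ) ≤ β := by linarith
    have haPβ : a ^ β ≤ P ^ β := Real.rpow_le_rpow ha.le haP hβ0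
    -- term 1 : (√(2+δ)+1)·√L / (P^β L^β) ≤ ((√(2+δ)+1)/a^β) · L^(1/2-β)
    have hterm1 : (Real.sqrt (2 + δ) + 1) * Real.sqrt L / (P ^ β * L ^ β)
        ≤ (Real.sqrt (2 + δ) + 1) / a ^ β * L ^ ((1:ℝ)/2 - β) := by
      have hLdiv : Real.sqrt L / L ^ β = L ^ ((1:ℝ)/2 - β) := by
        rw [hsqL, ← Real.rpow_sub hL0]
      have h1 : (Real.sqrt (2 + δ) + 1) * Real.sqrt L / (P ^ β * L ^ β)
          ≤ (Real.sqrt (2 + δ) + 1) * Real.sqrt L / (a ^ β * L ^ β) := by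
        apply div_le_div_of_nonneg_left _ (by positivity) _
        · positivity
        · exact mul_le_mul_of_nonneg_right haPβ hLβ.le
      refine h1.trans (le_of_eq ?_)
      rw [← hLdiv]
      field_simp
    -- term 2 : √P / (P^β L^β) ≤ a^(1/2-β) · L^(1/2-β)
    have hterm2 : Real.sqrt P / (P ^ β * L ^ β) ≤ a ^ ((1:ℝ)/2 - β) * L ^ ((1:ℝ)/2 - β) := by
      have hPneg : Real.sqrt P / P ^ β = P ^ ((1:ℝ)/2 - β) := by
        rw [hsqP, ← Real.rpow_sub hP0]
      have hPa : P ^ ((1:ℝ)/2 - β) ≤ a ^ ((1:ℝ)/2 - β) := by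
        rw [show (1:ℝ)/2 - β = -(β - 1/2) by ring, Real.rpow_neg hP0.le, Real.rpow_neg ha.le]
        apply inv_anti₀ (Real.rpow_pos_of_pos ha _)
        exact Real.rpow_le_rpow ha.le haP (by linarith)
      have hLneg : (L ^ β)⁻¹ ≤ L ^ ((1:ℝ)/2 - β) := by
        rw [← Real.rpow_neg hL0.le]
        exact Real.rpow_le_rpow_of_exponent_le hL1 (by linarith)
      calc Real.sqrt P / (P ^ β * L ^ β) = (Real.sqrt P / P ^ β) * (L ^ β)⁻¹ := by
            field_simp
        _ = P ^ ((1:ℝ)/2 - β) * (L ^ β)⁻¹ := by rw [hPneg]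
        _ ≤ a ^ ((1:ℝ)/2 - β) * L ^ ((1:ℝ)/2 - β) := by
            apply mul_le_mul hPa hLneg (by positivity) (by positivity)
    calc (Real.sqrt A + Real.sqrt P + Real.sqrt L) / (P ^ β * L ^ β)
        ≤ ((Real.sqrt (2 + δ) + 1) * Real.sqrt L + Real.sqrt P) / (P ^ β * L ^ β) := by
          apply div_le_div_of_nonneg_right _ (by positivity)
          linarith [Real.sqrt_nonneg L]
      _ = (Real.sqrt (2 + δ) + 1) * Real.sqrt L / (P ^ β * L ^ β)
            + Real.sqrt P / (P ^ β * L ^ β) := by ring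
      _ ≤ (Real.sqrt (2 + δ) + 1) / a ^ β * L ^ ((1:ℝ)/2 - β)
            + a ^ ((1:ℝ)/2 - β) * L ^ ((1:ℝ)/2 - β) := add_le_add hterm1 hterm2
      _ = K * L ^ ((1:ℝ)/2 - β) := by rw [hK_def]; ring
  -- put it together
  have hD : Real.sqrt s * P ^ β * L ^ β = Real.sqrt s * (P ^ β * L ^ β) := by ring
  calc |G t - G (t - s)| / (Real.sqrt s * P ^ β * L ^ β)
      ≤ M * (Real.sqrt s * (Real.sqrt A + Real.sqrt P + Real.sqrt L))
          / (Real.sqrt s * P ^ β * L ^ β) := by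
        apply div_le_div_of_nonneg_right hnum (by positivity)
    _ = M * ((Real.sqrt A + Real.sqrt P + Real.sqrt L) / (P ^ β * L ^ β)) := by
        rw [hD, mul_div_assoc]
        congr 1
        rw [mul_div_mul_left _ _ (ne_of_gt hsq)]
    _ ≤ M * (K * L ^ ((1:ℝ)/2 - β)) := by
        apply mul_le_mul_of_nonneg_left hrpowsum hM
    _ ≤ M * ε := mul_le_mul_of_nonneg_left hKε hM
    _ = ε * M * 1 := by ring
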